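/- Full-state indistinguishability ≈full on states of the stack machine with calls and returns is symmetric and transitive (a partial equivalence relation), where high states are compared after cropping their stacks above the topmost low return address. -/
import Mathlib


/-- The two-point label lattice: `L` (low/public) and `H` (high/secret). -/
inductive Lab where
  | L
  | H
deriving DecidableEq

/-- `L ⊑ H`; the flows-to ordering. -/
def Lab.flows : Lab → Lab → Prop
  | .H, .L => False
  | _, _ => True

/-- Join (least upper bound) of two labels. -/
def Lab.join : Lab → Lab → Lab
  | .L, .L => .L
  | _, _ => .H

/-- A labeled integer `n@ℓ`. -/
structure LInt where
  val : Int
  lab : Lab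
deriving DecidableEq

/-- Stack elements: labeled integers, or return frames `Ret(n, k)@ℓ`
recording a return address `n`, a result arity `k ∈ {0,1}`, and a label. -/
inductive SElt where
  | V (v : LInt)
  | Ret (n : Int) (k : ℕ) (ℓ : Lab)
deriving DecidableEq

/-- Instructions of the stack machine with calls and returns. -/
inductive Instr where
  | Push (v : LInt)
  | Pop
  | Load
  | Store
  | Add
  | Noop
  | Halt
  | Jump
  | Call (k k' : ℕ)
  | Return
deriving DecidableEq

/-- Lookup a list at an integer index. -/
def getI {α : Type} (xs : List α) (i : Int) : Option α :=
  if 0 ≤ i then xs[i.toNat]? else none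

/-- Update a list at an integer index. -/
def setI {α : Type} (xs : List α) (i : Int) (a : α) : List α :=
  if 0 ≤ i then xs.set i.toNat a else xs

/-- A machine state: a labeled program counter, a stack of stack elements, a
data memory, and an instruction memory. -/
structure St where
  pc : LInt
  stk : List SElt
  mem : List LInt
  imem : List Instr

/-- Indistinguishability of labeled integers. -/
def LInt.indist (a b : LInt) : Prop :=
  (a.lab = Lab.H ∧ b.lab = Lab.H) ∨ (a.val = b.val ∧ a.lab = Lab.L ∧ b.lab = Lab.L)

/-- Indistinguishability of stack elements: labeled integers are related as
usual, return frames are related iff both labels are `H` or both are `L`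
with equal addresses and arities, and a labeled integer is never related to
a return frame. -/
def SElt.indist : SElt → SElt → Prop
  | .V a, .V b => LInt.indist a b
  | .Ret n1 k1 ℓ1, .Ret n2 k2 ℓ2 =>
      (ℓ1 = Lab.H ∧ ℓ2 = Lab.H) ∨ (n1 = n2 ∧ k1 = k2 ∧ ℓ1 = Lab.L ∧ ℓ2 = Lab.L)
  | _, _ => False

/-- Indistinguishability of instructions. -/
def Instr.indist : Instr → Instr → Prop
  | .Push a, .Push b => LInt.indist a b
  | i1, i2 => i1 = i2

/-- Pointwise lifting of a relation to lists. -/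
def ListIndist {α : Type} (R : α → α → Prop) (xs ys : List α) : Prop :=
  xs.length = ys.length ∧
  ∀ j (h1 : j < xs.length) (h2 : j < ys.length),
    R (xs.get ⟨j, h1⟩) (ys.get ⟨j, h2⟩)

/-- Remove elements from the top of a stack until reaching the first return
frame labeled `L` (or until the stack is empty). -/
def cropStack : List SElt → List SElt
  | [] => []
  | SElt.Ret n k Lab.L :: s => SElt.Ret n k Lab.L :: s
  | _ :: s => cropStack s

/-- Full-state indistinguishability `≈full`: the memories and instruction
memories are pointwise indistinguishable and the pc labels are equal;
if the pc labels are `L` then the stacks are pointwise indistinguishable and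
the pcs are indistinguishable; if the pc labels are `H` then the stacks are
compared pointwise after cropping above the topmost low return frame. -/
def IndistFull (S1 S2 : St) : Prop :=
  ListIndist LInt.indist S1.mem S2.mem ∧
  ListIndist Instr.indist S1.imem S2.imem ∧
  S1.pc.lab = S2.pc.lab ∧
  (S1.pc.lab = Lab.L →
    ListIndist SElt.indist S1.stk S2.stk ∧ LInt.indist S1.pc S2.pc) ∧
  (S1.pc.lab = Lab.H →
    ListIndist SElt.indist (cropStack S1.stk) (cropStack S2.stk))

lemma LInt.indist_symm {a b : LInt} (h : LInt.indist a b) : LInt.indist b a := by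
  unfold LInt.indist at *; tauto

lemma LInt.indist_trans {a b c : LInt} (h1 : LInt.indist a b) (h2 : LInt.indist b c) :
    LInt.indist a c := by
  unfold LInt.indist at *
  rcases h1 with ⟨ha, hb⟩ | ⟨hv, ha, hb⟩ <;> rcases h2 with ⟨hb', hc⟩ | ⟨hv', hb', hc⟩ <;>
    simp_all

lemma SElt.indist_symm {a b : SElt} (h : SElt.indist a b) : SElt.indist b a := by
  cases a <;> cases b <;> unfold SElt.indist at * <;> first
  | exact LInt.indist_symm h
  | tauto

lemma SElt.indist_trans {a b c : SElt} (h1 : SElt.indist a b) (h2 : SElt.indist b c) :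
    SElt.indist a c := by
  cases a <;> cases b <;> cases c <;> unfold SElt.indist at * <;> first
  | exact LInt.indist_trans h1 h2
  | tauto
  | (rcases h1 with ⟨h,h'⟩|⟨h,h',h'',h'''⟩ <;> rcases h2 with ⟨g,g'⟩|⟨g,g',g'',g'''⟩ <;> simp_all)

lemma Instr.indist_symm {a b : Instr} (h : Instr.indist a b) : Instr.indist b a := by
  cases a <;> cases b <;> unfold Instr.indist at * <;> first
  | exact LInt.indist_symm h
  | simp_all

lemma Instr.indist_trans {a b c : Instr} (h1 : Instr.indist a b) (h2 : Instr.indist b c) :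
    Instr.indist a c := by
  cases a <;> cases b <;> cases c <;> unfold Instr.indist at * <;> first
  | exact LInt.indist_trans h1 h2
  | simp_all

lemma ListIndist.symm {α : Type} {R : α → α → Prop}
    (hR : ∀ a b, R a b → R b a) {xs ys : List α}
    (h : ListIndist R xs ys) : ListIndist R ys xs := by
  obtain ⟨hl, hp⟩ := h
  exact ⟨hl.symm, fun j h1 h2 => hR _ _ (hp j h2 h1)⟩

lemma ListIndist.trans {α : Type} {R : α → α → Prop}
    (hR : ∀ a b c, R a b → R b c → R a c) {xs ys zs : List α}
    (h1 : ListIndist R xs ys) (h2 : ListIndist R ys zs) : ListIndist R xs zs := by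
  obtain ⟨hl1, hp1⟩ := h1
  obtain ⟨hl2, hp2⟩ := h2
  refine ⟨hl1.trans hl2, fun j ha hc => ?_⟩
  have hb : j < ys.length := hl1 ▸ ha
  exact hR _ _ _ (hp1 j ha hb) (hp2 j hb hc)

/-- `≈full` is a partial equivalence relation: symmetric and transitive. -/
theorem indistFull_symm_trans :
    (∀ S1 S2 : St, IndistFull S1 S2 → IndistFull S2 S1) ∧
    (∀ S1 S2 S3 : St, IndistFull S1 S2 → IndistFull S2 S3 → IndistFull S1 S3) := by
  constructor
  · rintro S1 S2 ⟨hm, hi, hpc, hL, hH⟩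
    refine ⟨hm.symm (fun _ _ h => LInt.indist_symm h),
      hi.symm (fun _ _ h => Instr.indist_symm h), hpc.symm, ?_, ?_⟩
    · intro h2
      obtain ⟨hs, hp⟩ := hL (hpc.trans h2)
      exact ⟨hs.symm (fun _ _ h => SElt.indist_symm h), LInt.indist_symm hp⟩
    · intro h2
      exact (hH (hpc.trans h2)).symm (fun _ _ h => SElt.indist_symm h)
  · rintro S1 S2 S3 ⟨hm, hi, hpc, hL, hH⟩ ⟨hm', hi', hpc', hL', hH'⟩
    refine ⟨hm.trans (R := LInt.indist) (fun _ _ _ a b => LInt.indist_trans a b) hm',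
      hi.trans (R := Instr.indist) (fun _ _ _ a b => Instr.indist_trans a b) hi', hpc.trans hpc', ?_, ?_⟩
    · intro h1
      obtain ⟨hs, hp⟩ := hL h1
      obtain ⟨hs', hp'⟩ := hL' (hpc ▸ h1)
      exact ⟨hs.trans (R := SElt.indist) (fun _ _ _ a b => SElt.indist_trans a b) hs', LInt.indist_trans hp hp'⟩
    · intro h1
      exact (hH h1).trans (R := SElt.indist) (fun _ _ _ a b => SElt.indist_trans a b) (hH' (hpc ▸ h1))
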